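/- arXiv:math/0312401 — 6 statements merged into one kernel-verified Lean document; each statement's English description precedes it below -/
import Mathlib

section
/- Let f : ℕ → ℝ, let (Δ f)(x) = f(x+1) − f(x), and let n, x be natural numbers. Then f(x) = ∑_{k=0}^{n} C(x, k) (Δ^k f)(0) + ∑_{r=0}^{x−1} C(x − r − 1, n) (Δ^{n+1} f)(r) (the Δ-calculus Bernoulli–Taylor formula with rest term of Cauchy type). -/
/-!
Induction on `x`, applied to the shifted function `f (· + 1)`, whose iterated differences at `0`
are those of `f` at `1`. Writing `Δᵏ f 1 = Δᵏ f 0 + Δᵏ⁺¹ f 0` and collecting terms by Pascal's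
rule turns the Taylor sum of `f (· + 1)` at `x` into the Taylor sum of `f` at `x + 1`, up to the
top term `C(x, n) Δⁿ⁺¹ f 0`, which is exactly the `r = 0` term of the rest at `x + 1`.
-/

open Finset fwdDiff

variable {G : Type*} [AddCommGroup G]

lemma fwdDiff_iter_apply_one (f : ℕ → G) (k : ℕ) :
    Δ_[1] ^[k] f 1 = Δ_[1] ^[k] f 0 + Δ_[1] ^[k + 1] f 0 := by
  rw [Function.iterate_succ_apply', fwdDiff, zero_add, add_sub_cancel]

lemma sum_range_choose_smul_add_succ (a : ℕ → G) (x n : ℕ) :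
    ∑ k ∈ range (n + 1), x.choose k • (a k + a (k + 1))
      = ∑ k ∈ range (n + 1), (x + 1).choose k • a k + x.choose n • a (n + 1) := by
  have pascal : ∑ k ∈ range (n + 1), (x + 1).choose k • a k
      = ∑ k ∈ range (n + 1), x.choose k • a k + ∑ k ∈ range n, x.choose k • a (k + 1) := by
    simp only [sum_range_succ' _ n, Nat.choose_succ_succ', add_nsmul, sum_add_distrib,
      Nat.choose_zero_right]
    abel
  simp only [pascal, smul_add, sum_add_distrib, sum_range_succ (fun k ↦ x.choose k • a (k + 1))]
  abel

lemma eq_sum_choose_fwdDiff_iter_add_remainder (f : ℕ → G) (n x : ℕ) :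
    f x = ∑ k ∈ range (n + 1), x.choose k • Δ_[1] ^[k] f 0
      + ∑ r ∈ range x, (x - r - 1).choose n • Δ_[1] ^[n + 1] f r := by
  induction x generalizing f with
  | zero => simp [sum_range_succ']
  | succ x ih =>
    have remainder_succ : ∑ r ∈ range (x + 1), (x + 1 - r - 1).choose n • Δ_[1] ^[n + 1] f r
        = ∑ r ∈ range x, (x - r - 1).choose n • Δ_[1] ^[n + 1] f (r + 1)
          + x.choose n • Δ_[1] ^[n + 1] f 0 := by
      rw [sum_range_succ']
      congr 2 with r
      congr 2
      omega
    have shifted := ih (fun y ↦ f (y + 1))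
    simp only [fwdDiff_iter_comp_add, zero_add, fwdDiff_iter_apply_one] at shifted
    rw [shifted, remainder_succ, sum_range_choose_smul_add_succ]
    abel

/-- Δ-calculus Bernoulli–Taylor formula with rest term of Cauchy type:
`f(x) = ∑_{k=0}^{n} C(x,k) (Δ^k f)(0) + ∑_{r=0}^{x-1} C(x-r-1, n) (Δ^{n+1} f)(r)`. -/
theorem delta_bernoulli_taylor (f : ℕ → ℝ) (n x : ℕ) :
    f x = ∑ k ∈ Finset.range (n + 1),
        (x.choose k : ℝ) * ((fun (g : ℕ → ℝ) => fun y => g (y + 1) - g y)^[k] f) 0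
      + ∑ r ∈ Finset.range x,
        ((x - r - 1).choose n : ℝ)
          * ((fun (g : ℕ → ℝ) => fun y => g (y + 1) - g y)^[n + 1] f) r := by
  have taylor := eq_sum_choose_fwdDiff_iter_add_remainder f n x
  simp only [nsmul_eq_mul] at taylor
  -- `Δ_[1]` unfolds to the difference operator written out in the statement
  exact taylor
end

section
/- Let f : ℤ → ℝ, let (∇ f)(x) = f(x) − f(x−1) be the backward difference operator, let α be a natural number and n a natural number. Then f(0) = ∑_{k=0}^{n} (−1)^k C(α, k) (∇^k f)(α) + (−1)^{n+1} ∑_{r=0}^{α−1} C(r, n) (∇^{n+1} f)(r+1) (the Bernoulli–Maclaurin formula of ∇-type with rest term of Cauchy type). -/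
/-!
Induction on `n`. The case `n = 0` is the telescoping sum `∑_{r<α} (∇f)(r+1) = f(α) - f(0)`.
The step is a summation by parts: Pascal's rule `C(r+1,n+1) = C(r,n) + C(r,n+1)` turns
`∑_{r<α} C(r,n) g(r+1)` into the boundary term `C(α,n+1) g(α)` minus
`∑_{r<α} C(r,n+1) (∇g)(r+1)`, which, for `g = ∇^{n+1} f`, moves one more term of the
expansion out of the remainder.
-/

open Finset

variable {R : Type*} [CommRing R]

def backwardDiff (g : ℤ → R) : ℤ → R := fun y => g y - g (y - 1)

lemma sum_range_backwardDiff (g : ℤ → R) (α : ℕ) :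
    ∑ r ∈ range α, backwardDiff g ((r : ℤ) + 1) = g α - g 0 := by
  simpa [backwardDiff] using sum_range_sub (fun r : ℕ => g r) α

lemma sum_range_choose_mul_eq_sub_sum_backwardDiff (g : ℤ → R) (α n : ℕ) :
    ∑ r ∈ range α, (r.choose n : R) * g ((r : ℤ) + 1)
      = (α.choose (n + 1) : R) * g α
        - ∑ r ∈ range α, (r.choose (n + 1) : R) * backwardDiff g ((r : ℤ) + 1) := by
  have telescope := sum_range_sub (fun r : ℕ => (r.choose (n + 1) : R) * g r) α
  simp only [Nat.choose_zero_succ, Nat.cast_zero, zero_mul, sub_zero] at telescope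
  rw [eq_sub_iff_add_eq, ← sum_add_distrib, ← telescope]
  refine sum_congr rfl fun r _ => ?_
  simp only [backwardDiff, Nat.choose_succ_succ, Nat.cast_add, Nat.cast_succ, add_sub_cancel_right]
  ring

theorem eq_sum_backwardDiff_add_remainder (f : ℤ → R) (α n : ℕ) :
    f 0 = ∑ k ∈ range (n + 1), (-1 : R) ^ k * (α.choose k : R) * (backwardDiff^[k] f) α
      + (-1 : R) ^ (n + 1) * ∑ r ∈ range α,
          (r.choose n : R) * (backwardDiff^[n + 1] f) ((r : ℤ) + 1) := by
  induction n with
  | zero =>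
    simp only [zero_add, sum_range_one, Function.iterate_zero, Function.iterate_one, id_eq,
      Nat.choose_zero_right, Nat.cast_one, pow_zero, pow_one, one_mul,
      sum_range_backwardDiff]
    ring
  | succ n ih =>
    rw [ih, sum_range_choose_mul_eq_sub_sum_backwardDiff, sum_range_succ _ (n + 1),
      ← Function.iterate_succ_apply' backwardDiff (n + 1) f]
    ring

/-- Bernoulli–Maclaurin formula of ∇-type with rest term of Cauchy type:
for `f : ℤ → ℝ` and the backward difference `(∇ f)(x) = f(x) - f(x-1)`,
`f(0) = ∑_{k=0}^{n} (-1)^k C(α,k) (∇^k f)(α)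
       + (-1)^{n+1} ∑_{r=0}^{α-1} C(r,n) (∇^{n+1} f)(r+1)`. -/
theorem nabla_bernoulli_maclaurin (f : ℤ → ℝ) (α n : ℕ) :
    f 0 = ∑ k ∈ Finset.range (n + 1),
        (-1 : ℝ) ^ k * (α.choose k : ℝ)
          * ((fun (g : ℤ → ℝ) => fun y => g y - g (y - 1))^[k] f) (α : ℤ)
      + (-1 : ℝ) ^ (n + 1) * ∑ r ∈ Finset.range α,
          (r.choose n : ℝ)
            * ((fun (g : ℤ → ℝ) => fun y => g y - g (y - 1))^[n + 1] f) ((r : ℤ) + 1) :=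
  eq_sum_backwardDiff_add_remainder f α n
end

section
/- For all polynomials f, g ∈ F[X] the Leibniz *_ψ rule holds: ∂_ψ(f *_ψ g) = (D f) *_ψ g + f *_ψ (∂_ψ g), where D f is the ordinary derivative of f. -/
open Polynomial

/-- The Leibniz `*_ψ` rule: `∂_ψ(f *_ψ g) = (D f) *_ψ g + f *_ψ (∂_ψ g)`,
where `f *_ψ g = f(x̂_ψ)(g)` and `D` is the ordinary formal derivative. -/
theorem psi_leibniz_rule {F : Type*} [Field F] [CharZero F]
    (ψ : ℕ → F) (hψ : ∀ n, 1 ≤ n → ψ n ≠ 0)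
    (dψ xψ : Module.End F (Polynomial F))
    (hd1 : dψ 1 = 0)
    (hd : ∀ n, 1 ≤ n → dψ (X ^ n) = ψ n • X ^ (n - 1))
    (hx : ∀ n : ℕ, xψ (X ^ n) = (((n : F) + 1) / ψ (n + 1)) • X ^ (n + 1))
    (f g : Polynomial F) :
    dψ (Polynomial.aeval xψ f g)
      = Polynomial.aeval xψ (Polynomial.derivative f) g
        + Polynomial.aeval xψ f (dψ g) := by
  -- Key commutator relation: dψ (xψ p) = xψ (dψ p) + p
  have hkeyX : ∀ n : ℕ, dψ (xψ (X ^ n)) = xψ (dψ (X ^ n)) + X ^ n := by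
    intro n
    have hL : dψ (xψ (X ^ n)) = ((n : F) + 1) • X ^ n := by
      rw [hx n, map_smul, hd (n + 1) (by omega)]
      simp only [Nat.add_sub_cancel, smul_smul]
      rw [div_mul_cancel₀ _ (hψ (n + 1) (by omega))]
    rw [hL]
    cases n with
    | zero =>
      simp only [pow_zero, hd1, map_zero, zero_add]
      norm_num
    | succ m =>
      rw [hd (m + 1) (by omega)]
      simp only [Nat.add_sub_cancel, map_smul, hx m, smul_smul]
      rw [mul_div_assoc', mul_div_cancel_left₀ _ (hψ (m + 1) (by omega))]
      push_cast
      module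
  have hkey : ∀ p : Polynomial F, dψ (xψ p) = xψ (dψ p) + p := by
    intro p
    induction p using Polynomial.induction_on' with
    | add p q hp hq =>
      simp only [map_add, hp, hq]; abel
    | monomial n a =>
      rw [← smul_X_eq_monomial, map_smul, map_smul, hkeyX, map_smul, map_smul,
        smul_add]
  -- Main statement by induction on f
  induction f using Polynomial.induction_on with
  | C a =>
    simp [aeval_C, Algebra.algebraMap_eq_smul_one, LinearMap.smul_apply,
      map_smul]
  | add p q hp hq =>
    simp only [map_add, LinearMap.add_apply, hp, hq]
    abel
  | monomial n a ih =>
    have hrw : C a * X ^ (n + 1) = X * (C a * X ^ n) := by ring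
    rw [hrw]
    have haeval : ∀ (p : Polynomial F) (h : Polynomial F),
        aeval xψ (X * p) h = xψ (aeval xψ p h) := by
      intro p h
      rw [map_mul, aeval_X, Module.End.mul_apply]
    have hder : derivative (X * (C a * X ^ n))
        = C a * X ^ n + X * derivative (C a * X ^ n) := by
      rw [derivative_mul, derivative_X, one_mul]
    rw [haeval, hkey, ih, map_add, hder, map_add, LinearMap.add_apply,
      haeval, haeval]
    abel
end

section
/- For all natural numbers n and k, the *_ψ product of *_ψ powers satisfies x^{n*_ψ} *_ψ x^{k*_ψ} = (n!/n_ψ!) x^{(n+k)*_ψ}; that is, ((n!/n_ψ!) X^n) *_ψ ((k!/k_ψ!) X^k) = (n!/n_ψ!)((n+k)!/(n+k)_ψ!) X^{n+k}. -/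
open Polynomial Finset

/-! Both ψ-powers have coefficients that are products of the weights `(i + 1) / ψ (i + 1)`.
Applying `x̂_ψ ^ n` to `X ^ k` multiplies by the next `n` weights, so the coefficient of
`x^{k*_ψ}` is extended to that of `x^{(n+k)*_ψ}`. -/

theorem Module.End.pow_apply_X_pow_of_apply_X_pow {R : Type*} [CommSemiring R]
    (T : Module.End R R[X]) (c : ℕ → R) (hT : ∀ n, T (X ^ n) = c n • X ^ (n + 1))
    (m k : ℕ) : (T ^ m) (X ^ k) = (∏ j ∈ range m, c (k + j)) • X ^ (k + m) := by
  induction m with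
  | zero => simp
  | succ m ih =>
    rw [pow_succ', Module.End.mul_apply, ih, map_smul, hT, smul_smul, prod_range_succ,
      add_assoc]

theorem factorial_div_prod_eq_prod_div {F : Type*} [Semifield F] (ψ : ℕ → F) (m : ℕ) :
    (m.factorial : F) / ∏ i ∈ range m, ψ (i + 1) = ∏ i ∈ range m, ((i + 1 : F) / ψ (i + 1)) := by
  rw [prod_div_distrib, ← prod_range_add_one_eq_factorial, Nat.cast_prod]
  simp only [Nat.cast_add_one]

theorem psi_product_of_psi_powers_general {F : Type*} [Field F]
    (ψ : ℕ → F)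
    (xψ : Module.End F (Polynomial F))
    (hx : ∀ n : ℕ, xψ (X ^ n) = (((n : F) + 1) / ψ (n + 1)) • X ^ (n + 1))
    (n k : ℕ) :
    Polynomial.aeval (R := F) xψ
        (((n.factorial : F) / ∏ i ∈ Finset.range n, ψ (i + 1)) • X ^ n)
        (((k.factorial : F) / ∏ i ∈ Finset.range k, ψ (i + 1)) • X ^ k)
      = (((n.factorial : F) / ∏ i ∈ Finset.range n, ψ (i + 1))
          * (((n + k).factorial : F) / ∏ i ∈ Finset.range (n + k), ψ (i + 1)))
          • X ^ (n + k) := by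
  rw [map_smul (aeval xψ), aeval_X_pow, LinearMap.smul_apply, map_smul,
    Module.End.pow_apply_X_pow_of_apply_X_pow xψ _ hx, smul_smul, smul_smul, mul_assoc]
  rw [factorial_div_prod_eq_prod_div, factorial_div_prod_eq_prod_div,
    factorial_div_prod_eq_prod_div, add_comm n k, prod_range_add]

/-- The `*_ψ` product of `*_ψ` powers:
`x^{n*_ψ} *_ψ x^{k*_ψ} = (n!/n_ψ!) x^{(n+k)*_ψ}`, i.e.
`((n!/n_ψ!) X^n) *_ψ ((k!/k_ψ!) X^k) = (n!/n_ψ!)((n+k)!/(n+k)_ψ!) X^{n+k}`,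
where `f *_ψ g = f(x̂_ψ)(g)`. -/
theorem psi_product_of_psi_powers {F : Type*} [Field F] [CharZero F]
    (ψ : ℕ → F) (hψ : ∀ n, 1 ≤ n → ψ n ≠ 0)
    (xψ : Module.End F (Polynomial F))
    (hx : ∀ n : ℕ, xψ (X ^ n) = (((n : F) + 1) / ψ (n + 1)) • X ^ (n + 1))
    (n k : ℕ) :
    Polynomial.aeval (R := F) xψ
        (((n.factorial : F) / ∏ i ∈ Finset.range n, ψ (i + 1)) • X ^ n)
        (((k.factorial : F) / ∏ i ∈ Finset.range k, ψ (i + 1)) • X ^ k)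
      = (((n.factorial : F) / ∏ i ∈ Finset.range n, ψ (i + 1))
          * (((n + k).factorial : F) / ∏ i ∈ Finset.range (n + k), ψ (i + 1)))
          • X ^ (n + k) :=
  psi_product_of_psi_powers_general ψ xψ hx n k
end

section
/- The formula of ψ-integration per partes holds: for all polynomials f, g ∈ F[X] and all a, b ∈ F, (I_ψ(f *_ψ ∂_ψ g))(b) − (I_ψ(f *_ψ ∂_ψ g))(a) = [(f *_ψ g)(b) − (f *_ψ g)(a)] − [(I_ψ((D f) *_ψ g))(b) − (I_ψ((D f) *_ψ g))(a)], where (h)(c) denotes evaluation of the polynomial h at c. -/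
open Polynomial

/-- ψ-integration per partes: for all `f g ∈ F[X]` and `a b ∈ F`,
`[I_ψ(f *_ψ ∂_ψ g)]_a^b = [(f *_ψ g)]_a^b - [I_ψ((D f) *_ψ g)]_a^b`,
where `f *_ψ g = f(x̂_ψ)(g)` and `D` is the ordinary formal derivative. -/
theorem psi_integration_per_partes {F : Type*} [Field F] [CharZero F]
    (ψ : ℕ → F) (hψ : ∀ n, 1 ≤ n → ψ n ≠ 0)
    (dψ xψ Iψ : Module.End F (Polynomial F))
    (hd1 : dψ 1 = 0)
    (hd : ∀ n, 1 ≤ n → dψ (X ^ n) = ψ n • X ^ (n - 1))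
    (hx : ∀ n : ℕ, xψ (X ^ n) = (((n : F) + 1) / ψ (n + 1)) • X ^ (n + 1))
    (hI : ∀ n : ℕ, Iψ (X ^ n) = (ψ (n + 1))⁻¹ • X ^ (n + 1))
    (f g : Polynomial F) (a b : F) :
    (Iψ (Polynomial.aeval (R := F) xψ f (dψ g))).eval b
        - (Iψ (Polynomial.aeval (R := F) xψ f (dψ g))).eval a
      = ((Polynomial.aeval (R := F) xψ f g).eval b
          - (Polynomial.aeval (R := F) xψ f g).eval a)
        - ((Iψ (Polynomial.aeval (R := F) xψ (Polynomial.derivative f) g)).eval b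
            - (Iψ (Polynomial.aeval (R := F) xψ (Polynomial.derivative f) g)).eval a) := by
  -- commutator relation: dψ ∘ xψ = xψ ∘ dψ + id
  have hcomm : ∀ p : F[X], dψ (xψ p) = xψ (dψ p) + p := by
    intro p
    induction p using Polynomial.induction_on' with
    | add p q hp hq => simp [map_add, hp, hq]; ring
    | monomial n c =>
      rw [← smul_X_eq_monomial, map_smul, map_smul, map_smul, map_smul]
      cases n with
      | zero =>
        rw [hx 0, map_smul, hd (0 + 1) (by omega)]
        have e0 : dψ ((X : F[X]) ^ 0) = 0 := by rw [pow_zero]; exact hd1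
        rw [e0, map_zero]
        simp only [smul_zero, zero_add, smul_smul]
        norm_num
        rw [inv_mul_cancel₀ (hψ 1 (by omega)), mul_one]
      | succ m =>
        rw [hx (m + 1), map_smul, hd (m + 1 + 1) (by omega), hd (m + 1) (by omega)]
        simp only [Nat.add_sub_cancel]
        rw [map_smul, hx m]
        simp only [smul_smul, ← add_smul]
        congr 1
        have h1 := hψ (m + 1) (by omega)
        have h2 := hψ (m + 1 + 1) (by omega)
        push_cast
        field_simp
  -- Weyl-type identity
  have hweyl : ∀ (q : F[X]) (p : F[X]),
      dψ (aeval (R := F) xψ q p)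
        = aeval (R := F) xψ q (dψ p) + aeval (R := F) xψ (derivative q) p := by
    intro q
    induction q using Polynomial.induction_on with
    | C c =>
      intro p
      simp [aeval_C, Module.algebraMap_end_apply, map_smul]
    | add q r hq hr =>
      intro p
      simp only [map_add, LinearMap.add_apply, hq p, hr p]
      ring
    | monomial n c ih =>
      intro p
      have hsplit : (C c * X ^ (n + 1) : F[X]) = (C c * X ^ n) * X := by ring
      have haevalX : ∀ r : F[X], ∀ s : F[X],
          aeval (R := F) xψ (r * X) s = aeval (R := F) xψ r (xψ s) := by
        intro r s
        rw [map_mul, aeval_X]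
        rfl
      have hder : (aeval (R := F) xψ) (derivative (C c * X ^ n * X)) p
          = (aeval (R := F) xψ) (derivative (C c * X ^ n)) (xψ p)
            + (aeval (R := F) xψ) (C c * X ^ n) p := by
        rw [derivative_mul, derivative_X, mul_one, map_add, LinearMap.add_apply, haevalX]
      rw [hsplit, haevalX, ih (xψ p), hcomm p, map_add, haevalX, hder]
      ring
  -- Iψ ∘ dψ = id - constant term
  have hId : ∀ p : F[X], Iψ (dψ p) = p - C (p.coeff 0) := by
    intro p
    induction p using Polynomial.induction_on' with
    | add p q hp hq =>
      simp only [map_add, hp, hq, coeff_add, C_add]; ring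
    | monomial n c =>
      rw [← smul_X_eq_monomial, map_smul, map_smul]
      cases n with
      | zero =>
        simp only [pow_zero, hd1, map_zero, smul_zero]
        have : ((c • (1 : F[X])).coeff 0) = c := by simp
        rw [this]
        simp [Algebra.smul_def]
      | succ m =>
        have hc : ((c • (X : F[X]) ^ (m + 1)).coeff 0) = 0 := by simp [coeff_X_pow]
        rw [hd (m + 1) (by omega), Nat.add_sub_cancel, map_smul, hI m, hc, map_zero,
          sub_zero, smul_smul, smul_smul]
        congr 1
        field_simp [hψ (m + 1) (by omega)]
  -- conclude
  have key : Iψ (aeval (R := F) xψ f (dψ g))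
      = aeval (R := F) xψ f g - C ((aeval (R := F) xψ f g).coeff 0)
        - Iψ (aeval (R := F) xψ (derivative f) g) := by
    have h1 := hweyl f g
    have h2 : aeval (R := F) xψ f (dψ g)
        = dψ (aeval (R := F) xψ f g) - aeval (R := F) xψ (derivative f) g := by
      rw [h1]; ring
    rw [h2, map_sub, hId]
  rw [key]
  simp only [eval_sub, eval_C]
  ring
end

section
/- (Bernoulli–Taylor ψ-series at 0.) Let f ∈ F[X] be a polynomial of degree at most n. Then f = ∑_{k=0}^{n} ((∂_ψ^k f)(0) / k!) · x^{k*_ψ} = ∑_{k=0}^{n} ((∂_ψ^k f)(0) / k_ψ!) · X^k, where (∂_ψ^k f)(0) denotes the evaluation at 0 of the k-th iterate of ∂_ψ applied to f; i.e. the ψ-Taylor expansion of f at 0 terminates with zero remainder once n reaches the degree of f. -/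
/-! Since `∂_ψ` lowers the `j+1`-st coefficient to the `j`-th one while multiplying it by `ψ (j+1)`,
`(∂_ψ^k f)(0) = k_ψ! · coeff f k`. The ψ-Taylor expansion is therefore the ordinary expansion
`f = ∑ coeff f k · X^k`, and the `k!` in the first form cancels. -/

open Polynomial

section PsiDerivative

variable {R : Type*} [CommSemiring R] (ψ : ℕ → R) {D : Module.End R R[X]}

theorem coeff_apply_of_apply_X_pow (hD1 : D 1 = 0)
    (hD : ∀ m, 1 ≤ m → D (X ^ m) = ψ m • X ^ (m - 1)) (f : R[X]) (j : ℕ) :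
    (D f).coeff j = ψ (j + 1) * f.coeff (j + 1) := by
  induction f using Polynomial.induction_on' with
  | add p q hp hq => rw [map_add, coeff_add, hp, hq, coeff_add, mul_add]
  | monomial m a =>
    rw [← smul_X_eq_monomial, map_smul, coeff_smul, coeff_smul, coeff_X_pow]
    rcases m with _ | m
    · simp [hD1]
    · rw [hD (m + 1) m.succ_pos, Nat.add_sub_cancel, coeff_smul, coeff_X_pow]
      by_cases h : j = m
      · simp [h, mul_comm]
      · simp [h]

theorem eval_zero_pow_apply_of_apply_X_pow (hD1 : D 1 = 0)
    (hD : ∀ m, 1 ≤ m → D (X ^ m) = ψ m • X ^ (m - 1)) (k : ℕ) (f : R[X]) :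
    ((D ^ k) f).eval 0 = (∏ i ∈ Finset.range k, ψ (i + 1)) * f.coeff k := by
  induction k generalizing f with
  | zero => simp [coeff_zero_eq_eval_zero]
  | succ k ih =>
    rw [pow_succ, Module.End.mul_apply, ih, coeff_apply_of_apply_X_pow ψ hD1 hD,
      Finset.prod_range_succ, mul_assoc]

end PsiDerivative

/-- Bernoulli–Taylor ψ-series at 0: for a polynomial `f` of degree at most `n`,
`f = ∑_{k=0}^{n} ((∂_ψ^k f)(0)/k!) · x^{k*_ψ} = ∑_{k=0}^{n} ((∂_ψ^k f)(0)/k_ψ!) · X^k`,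
where `x^{k*_ψ} = (k!/k_ψ!) X^k`. -/
theorem psi_bernoulli_taylor_series {F : Type*} [Field F] [CharZero F]
    (ψ : ℕ → F) (hψ : ∀ n, 1 ≤ n → ψ n ≠ 0)
    (dψ : Module.End F (Polynomial F))
    (hd1 : dψ 1 = 0)
    (hd : ∀ m, 1 ≤ m → dψ (X ^ m) = ψ m • X ^ (m - 1))
    (n : ℕ) (f : Polynomial F) (hf : f.natDegree ≤ n) :
    f = ∑ k ∈ Finset.range (n + 1),
          (((dψ ^ k) f).eval 0 / (k.factorial : F))
            • (((k.factorial : F) / ∏ i ∈ Finset.range k, ψ (i + 1)) • X ^ k)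
      ∧ f = ∑ k ∈ Finset.range (n + 1),
          (((dψ ^ k) f).eval 0 / ∏ i ∈ Finset.range k, ψ (i + 1)) • X ^ k := by
  have hcoeff (k : ℕ) : ((dψ ^ k) f).eval 0 / ∏ i ∈ Finset.range k, ψ (i + 1) = f.coeff k := by
    have hprod : ∏ i ∈ Finset.range k, ψ (i + 1) ≠ 0 :=
      Finset.prod_ne_zero_iff.mpr fun i _ => hψ (i + 1) (Nat.le_add_left 1 i)
    rw [eval_zero_pow_apply_of_apply_X_pow ψ hd1 hd, mul_div_cancel_left₀ _ hprod]
  have htaylor : f = ∑ k ∈ Finset.range (n + 1),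
      (((dψ ^ k) f).eval 0 / ∏ i ∈ Finset.range k, ψ (i + 1)) • X ^ k := by
    simp_rw [hcoeff, smul_X_eq_monomial]
    exact f.as_sum_range' (n + 1) (Nat.lt_succ_of_le hf)
  refine ⟨htaylor.trans (Finset.sum_congr rfl fun k _ => ?_), htaylor⟩
  have hk : (k.factorial : F) ≠ 0 := Nat.cast_ne_zero.mpr k.factorial_ne_zero
  rw [smul_smul, div_mul_div_cancel₀ hk]
end
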